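/- Let G be a finite simple graph and f a geometric product set-labeling of G in which every vertex label f(v) is a geometric progression with integer common ratio r_v ≥ 2 and |f(v)| ≥ 2. Then f is a strong product set-labeling (i.e., |f(u)∗f(v)| = |f(u)|·|f(v)| for every edge uv) if and only if for every edge uv, writing the endpoints so that r_u ≤ r_v, one has r_v = r_u^{|f(u)|} (i.e., the characteristic index of every edge equals the label size of its end vertex having smaller common ratio). -/

import Mathlib

/-!
Write each label as `{a r^i : i < m}`. If `r_v = r_u^m` with `m = |f u|`, the exponents
`i + m j` (`i < m`, `j < |f v|`) are the base-`m` expansions of `0, …, m |f v| - 1`, so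
`f u ∗ f v` is a progression with ratio `r_u` and `m |f v|` distinct terms. Conversely, if
`f u ∗ f v = {c t^k : k < m n}`, comparing least elements gives `c = a b`, comparing the
second-least ones gives `t = r_u` (this uses `r_u ≤ r_v`), so `r_v = r_u^K`; the exponent set
`{i + K j}` is then `{0, …, m n - 1}`, and its largest element `m - 1 + K (n - 1)` forces `K = m`.
-/

open Pointwise

/-- A finite set of positive integers is a geometric progression (with integer first term
`a > 0` and integer common ratio `r ≥ 2`). -/
def IsGeomProg (A : Finset ℕ) : Prop :=
  ∃ a r : ℕ, 0 < a ∧ 2 ≤ r ∧ A = (Finset.range A.card).image (fun i => a * r ^ i)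

open Finset

def geomProg (a r n : ℕ) : Finset ℕ := (range n).image (fun i => a * r ^ i)

section geomProg

variable {a b c r s t m n x : ℕ}

@[simp]
theorem mem_geomProg : x ∈ geomProg a r n ↔ ∃ i < n, a * r ^ i = x := by
  simp [geomProg]

theorem card_geomProg (ha : 0 < a) (hr : 2 ≤ r) : #(geomProg a r n) = n := by
  rw [geomProg, card_image_of_injective _ fun i j hij => Nat.pow_right_injective hr
    (Nat.eq_of_mul_eq_mul_left ha hij), card_range]

theorem mem_geomProg_mul_geomProg :
    x ∈ geomProg a r m * geomProg b s n ↔ ∃ i < m, ∃ j < n, a * b * (r ^ i * s ^ j) = x := by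
  simp only [mem_mul, mem_geomProg]
  constructor
  · rintro ⟨_, ⟨i, hi, rfl⟩, _, ⟨j, hj, rfl⟩, rfl⟩
    exact ⟨i, hi, j, hj, by ring⟩
  · rintro ⟨i, hi, j, hj, rfl⟩
    exact ⟨_, ⟨i, hi, rfl⟩, _, ⟨j, hj, rfl⟩, by ring⟩

theorem geomProg_mul_geomProg_pow (hm : 0 < m) :
    geomProg a r m * geomProg b (r ^ m) n = geomProg (a * b) r (m * n) := by
  ext x
  rw [mem_geomProg_mul_geomProg, mem_geomProg]
  constructor
  · rintro ⟨i, hi, j, hj, rfl⟩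
    refine ⟨i + m * j, ?_, by rw [pow_add, pow_mul]⟩
    calc i + m * j < m * (j + 1) := by linarith
      _ ≤ m * n := Nat.mul_le_mul_left m hj
  · rintro ⟨k, hk, rfl⟩
    refine ⟨k % m, Nat.mod_lt _ hm, k / m, Nat.div_lt_of_lt_mul hk, ?_⟩
    rw [← pow_mul, ← pow_add, Nat.mod_add_div]

theorem card_geomProg_mul_geomProg_pow (ha : 0 < a) (hb : 0 < b) (hr : 2 ≤ r) (hm : 0 < m) :
    #(geomProg a r m * geomProg b (r ^ m) n) = m * n := by
  rw [geomProg_mul_geomProg_pow hm, card_geomProg (Nat.mul_pos ha hb) hr]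

theorem first_term_eq_of_geomProg_mul_eq (ha : 0 < a) (hb : 0 < b) (hr : 0 < r) (hs : 0 < s)
    (hm : 0 < m) (hn : 0 < n) (h : geomProg a r m * geomProg b s n = geomProg c t (m * n)) :
    c = a * b := by
  have hab : a * b ∈ geomProg c t (m * n) :=
    h ▸ mem_geomProg_mul_geomProg.2 ⟨0, hm, 0, hn, by simp⟩
  have hc : c ∈ geomProg a r m * geomProg b s n :=
    h ▸ mem_geomProg.2 ⟨0, Nat.mul_pos hm hn, by simp⟩
  obtain ⟨k, -, hk⟩ := mem_geomProg.1 hab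
  obtain ⟨i, -, j, -, hij⟩ := mem_geomProg_mul_geomProg.1 hc
  refine le_antisymm (Nat.le_of_dvd (Nat.mul_pos ha hb) ⟨t ^ k, hk.symm⟩) ?_
  rw [← hij]
  exact Nat.le_mul_of_pos_right _ (by positivity)

theorem geomProg_one_mul_eq_of_geomProg_mul_eq (ha : 0 < a) (hb : 0 < b)
    (h : geomProg a r m * geomProg b s n = geomProg (a * b) t (m * n)) :
    geomProg 1 r m * geomProg 1 s n = geomProg 1 t (m * n) := by
  ext y
  have hy := congrArg (a * b * y ∈ ·) h
  simp only [mem_geomProg_mul_geomProg, mem_geomProg, eq_iff_iff,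
    mul_right_inj' (Nat.mul_pos ha hb).ne'] at hy
  simpa [mem_geomProg_mul_geomProg] using hy

theorem ratio_eq_of_geomProg_one_mul_eq (hr : 2 ≤ r) (hrs : r ≤ s) (hm : 2 ≤ m) (hn : 0 < n)
    (h : geomProg 1 r m * geomProg 1 s n = geomProg 1 t (m * n)) : t = r := by
  have hr_mem : r ∈ geomProg 1 t (m * n) :=
    h ▸ mem_geomProg_mul_geomProg.2 ⟨1, by omega, 0, hn, by simp⟩
  have ht_mem : t ∈ geomProg 1 r m * geomProg 1 s n :=
    h ▸ mem_geomProg.2 ⟨1, by nlinarith, by simp⟩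
  obtain ⟨k, -, hk⟩ := mem_geomProg.1 hr_mem
  obtain ⟨i, -, j, -, hij⟩ := mem_geomProg_mul_geomProg.1 ht_mem
  rw [one_mul] at hk
  rw [one_mul, one_mul] at hij
  have hk0 : k ≠ 0 := by rintro rfl; rw [pow_zero] at hk; omega
  refine le_antisymm (hk ▸ Nat.le_self_pow hk0 t) ?_
  rw [← hij]
  rcases Nat.eq_zero_or_pos i with rfl | hi
  · have hj : j ≠ 0 := by
      rintro rfl
      rw [pow_zero, pow_zero, one_mul] at hij
      rw [← hij, one_pow] at hk
      omega
    simpa using hrs.trans (Nat.le_self_pow hj s)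
  · calc r ≤ r ^ i := Nat.le_self_pow hi.ne' r
      _ ≤ r ^ i * s ^ j := Nat.le_mul_of_pos_right _ (pow_pos (by omega) j)

theorem eq_pow_of_geomProg_one_mul_eq (hr : 2 ≤ r) (hm : 0 < m) (hn : 2 ≤ n)
    (h : geomProg 1 r m * geomProg 1 s n = geomProg 1 r (m * n)) : s = r ^ m := by
  have hs_mem : s ∈ geomProg 1 r (m * n) :=
    h ▸ mem_geomProg_mul_geomProg.2 ⟨0, hm, 1, by omega, by simp⟩
  obtain ⟨K, -, rfl⟩ := mem_geomProg.1 hs_mem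
  have hexp : ∀ e, (∃ i < m, ∃ j < n, i + K * j = e) ↔ e < m * n := fun e => by
    have he := congrArg (r ^ e ∈ ·) h
    simpa [mem_geomProg_mul_geomProg, ← pow_mul, ← pow_add,
      Nat.pow_right_injective hr |>.eq_iff] using he
  have hlt : m - 1 + K * (n - 1) < m * n := (hexp _).1 ⟨m - 1, by omega, n - 1, by omega, rfl⟩
  obtain ⟨i, hi, j, hj, hij⟩ := (hexp (m * n - 1)).2
    (Nat.sub_lt (Nat.mul_pos hm (by omega)) one_pos)
  have hle : K * j ≤ K * (n - 1) := Nat.mul_le_mul_left K (by omega)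
  have hK : K * (n - 1) = m * (n - 1) := by
    have : m * n = m * (n - 1) + m := by
      rw [← mul_add_one, Nat.sub_add_cancel (by omega)]
    omega
  simp [Nat.eq_of_mul_eq_mul_right (by omega : 0 < n - 1) hK]

theorem pow_eq_of_isGeomProg_geomProg_mul (ha : 0 < a) (hb : 0 < b) (hr : 2 ≤ r) (hrs : r ≤ s)
    (hm : 2 ≤ m) (hn : 2 ≤ n) (hgeom : IsGeomProg (geomProg a r m * geomProg b s n))
    (hcard : #(geomProg a r m * geomProg b s n) = m * n) : s = r ^ m := by
  obtain ⟨c, t, -, -, h⟩ := hgeom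
  rw [hcard] at h
  obtain rfl := first_term_eq_of_geomProg_mul_eq ha hb (by omega) (by omega) (by omega)
    (by omega) h
  have h₁ := geomProg_one_mul_eq_of_geomProg_mul_eq ha hb h
  obtain rfl := ratio_eq_of_geomProg_one_mul_eq hr hrs hm (by omega) h₁
  exact eq_pow_of_geomProg_one_mul_eq hr (by omega) hn h₁

end geomProg

theorem geometric_strong_productSetLabeling_iff_general {V : Type*}
    (G : SimpleGraph V) (f : V → Finset ℕ) (rv : V → ℕ) (av : V → ℕ)
    (hr : ∀ v, 2 ≤ rv v) (ha : ∀ v, 0 < av v) (hcard : ∀ v, 2 ≤ (f v).card)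
    (hgp : ∀ v, f v = (Finset.range (f v).card).image (fun i => av v * (rv v) ^ i))
    (hgeom : ∀ u v, G.Adj u v → IsGeomProg (f u * f v)) :
    (∀ u v, G.Adj u v → (f u * f v).card = (f u).card * (f v).card) ↔
      (∀ u v, G.Adj u v → rv u ≤ rv v → rv v = (rv u) ^ (f u).card) := by
  have hf (v : V) : geomProg (av v) (rv v) #(f v) = f v := (hgp v).symm
  constructor
  · intro hstrong u v huv hle
    refine pow_eq_of_isGeomProg_geomProg_mul (ha u) (ha v) (hr u) hle (hcard u) (hcard v) ?_ ?_
    · rw [hf u, hf v]; exact hgeom u v huv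
    · rw [hf u, hf v]; exact hstrong u v huv
  · intro hpow
    have hstrong_of_le (u v : V) (huv : G.Adj u v) (hle : rv u ≤ rv v) :
        #(f u * f v) = #(f u) * #(f v) := by
      have h := card_geomProg_mul_geomProg_pow (m := #(f u)) (n := #(f v)) (ha u) (ha v) (hr u)
        (by linarith [hcard u])
      rwa [← hpow u v huv hle, hf u, hf v] at h
    intro u v huv
    rcases le_total (rv u) (rv v) with hle | hle
    · exact hstrong_of_le u v huv hle
    · rw [mul_comm, mul_comm #(f u)]
      exact hstrong_of_le v u huv.symm hle

/-- Let `f` be a geometric product set-labeling of a finite simple graph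
`G` in which every vertex label is a geometric progression with integer common ratio
`rv v ≥ 2` and `|f v| ≥ 2`. Then `f` is strong (`|f u ∗ f v| = |f u|·|f v|` for every
edge `uv`) iff for every edge `uv`, written so that `rv u ≤ rv v`, one has
`rv v = (rv u)^{|f u|}`. -/
theorem geometric_strong_productSetLabeling_iff {V : Type*} [Fintype V]
    (G : SimpleGraph V) (f : V → Finset ℕ) (rv : V → ℕ) (av : V → ℕ)
    (hinj : Function.Injective f)
    (hr : ∀ v, 2 ≤ rv v) (ha : ∀ v, 0 < av v) (hcard : ∀ v, 2 ≤ (f v).card)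
    (hgp : ∀ v, f v = (Finset.range (f v).card).image (fun i => av v * (rv v) ^ i))
    (hgeom : ∀ u v, G.Adj u v → IsGeomProg (f u * f v)) :
    (∀ u v, G.Adj u v → (f u * f v).card = (f u).card * (f v).card) ↔
      (∀ u v, G.Adj u v → rv u ≤ rv v → rv v = (rv u) ^ (f u).card) :=
  geometric_strong_productSetLabeling_iff_general G f rv av hr ha hcard hgp hgeom
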